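/- The total graph T(G) of a finite simple graph G is isomorphic to the square (2-distance graph) of the subdivision graph S(G): two vertices of S(G) are adjacent in S(G)^2 iff their distance in S(G) is 1 or 2; under this identification, the vertices of S(G) coming from V(G) induce G and the vertices coming from E(G) induce the line graph L(G). -/

import Mathlib

open MvPolynomial

/-- An arbitrary linear labeling of a finite vertex type. -/
noncomputable def someLinearOrder (V : Type*) [Fintype V] : LinearOrder V :=
  LinearOrder.lift' (Fintype.equivFin V) (Fintype.equivFin V).injective

/-- The graph polynomial `∏_{ij ∈ E, i<j} (x_i − x_j)` with respect to a given
linear labeling of the vertices. -/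
noncomputable def graphPolyAux {V : Type*} [Fintype V] (lo : LinearOrder V)
    (G : SimpleGraph V) : MvPolynomial V ℤ :=
  letI := lo
  letI := Classical.decRel G.Adj
  ∏ p ∈ Finset.univ.filter (fun p : V × V => G.Adj p.1 p.2 ∧ p.1 < p.2), (X p.1 - X p.2)

/-- The graph polynomial of `G` (its monomial support does not depend on the labeling). -/
noncomputable def graphPoly {V : Type*} [Fintype V] (G : SimpleGraph V) : MvPolynomial V ℤ :=
  graphPolyAux (someLinearOrder V) G

/-- The Alon–Tarsi number of `G`: one plus the minimum, over monomials with nonzero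
coefficient in the graph polynomial, of the maximum exponent of a variable. -/
noncomputable def alonTarsiNumber {V : Type*} [Fintype V] (G : SimpleGraph V) : ℕ :=
  1 + sInf {d : ℕ | ∃ m ∈ (graphPoly G).support, d = Finset.univ.sup fun v => m v}

/-- `G` is colorable from any assignment of lists of size `t`. -/
def Choosable {V : Type*} (G : SimpleGraph V) (t : ℕ) : Prop :=
  ∀ L : V → Finset ℕ, (∀ v, (L v).card = t) →
    ∃ c : V → ℕ, (∀ v, c v ∈ L v) ∧ ∀ ⦃v w⦄, G.Adj v w → c v ≠ c w

/-- The choice number (list chromatic number) of `G`. -/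
noncomputable def choiceNumber {V : Type*} (G : SimpleGraph V) : ℕ :=
  sInf {t : ℕ | Choosable G t}

/-- `M` is a 1-factorization of `G` into `Δ` perfect matchings. -/
def IsOneFactorization {V : Type*} (G : SimpleGraph V) {Δ : ℕ}
    (M : Fin Δ → G.Subgraph) : Prop :=
  (∀ i, (M i).IsPerfectMatching) ∧
  (∀ i j, i ≠ j → Disjoint (M i).edgeSet (M j).edgeSet) ∧
  (⋃ i, (M i).edgeSet) = G.edgeSet

/-- `G` is 1-factorizable into `Δ` perfect matchings. -/
def OneFactorizable {V : Type*} (G : SimpleGraph V) (Δ : ℕ) : Prop :=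
  ∃ M : Fin Δ → G.Subgraph, IsOneFactorization G M

/-- The total graph of `G`, on vertex set `V(G) ⊕ E(G)`. -/
def totalGraph {V : Type*} (G : SimpleGraph V) : SimpleGraph (V ⊕ G.edgeSet) where
  Adj x y := match x, y with
    | .inl v, .inl w => G.Adj v w
    | .inl v, .inr e => v ∈ (e : Sym2 V)
    | .inr e, .inl v => v ∈ (e : Sym2 V)
    | .inr e, .inr f => e ≠ f ∧ ∃ v, v ∈ (e : Sym2 V) ∧ v ∈ (f : Sym2 V)
  symm := by
    refine ⟨?_⟩
    rintro (v | e) (w | f) h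
    · exact G.adj_symm h
    · exact h
    · exact h
    · exact ⟨h.1.symm, h.2.imp fun v hv => ⟨hv.2, hv.1⟩⟩
  loopless := by
    refine ⟨?_⟩
    rintro (v | e) h
    · exact G.irrefl h
    · exact h.1 rfl

/-- The subdivision graph of `G`, on vertex set `V(G) ⊕ E(G)`. -/
def subdivisionGraph {V : Type*} (G : SimpleGraph V) : SimpleGraph (V ⊕ G.edgeSet) where
  Adj x y := match x, y with
    | .inl v, .inr e => v ∈ (e : Sym2 V)
    | .inr e, .inl v => v ∈ (e : Sym2 V)
    | _, _ => False
  symm := ⟨by rintro (v | e) (w | f) h <;> simp_all⟩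
  loopless := ⟨by rintro (v | e) h <;> simp_all⟩

/-- The square of a graph: adjacency at distance 1 or 2. -/
def squareGraph {W : Type*} (H : SimpleGraph W) : SimpleGraph W where
  Adj u v := u ≠ v ∧ (H.Adj u v ∨ ∃ w, H.Adj u w ∧ H.Adj w v)
  symm := ⟨fun u v ⟨hne, h⟩ =>
    ⟨hne.symm, h.imp (fun a => H.adj_symm a) fun ⟨w, h1, h2⟩ => ⟨w, h2.symm, h1.symm⟩⟩⟩
  loopless := ⟨fun u h => h.1 rfl⟩


namespace SimpleGraph

variable {V : Type*} {G : SimpleGraph V}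

theorem adj_of_mem_edgeSet_of_mem {e : Sym2 V} (he : e ∈ G.edgeSet) {v w : V}
    (hv : v ∈ e) (hw : w ∈ e) (hvw : v ≠ w) : G.Adj v w := by
  rwa [(Sym2.mem_and_mem_iff hvw).mp ⟨hv, hw⟩] at he

theorem squareGraph_subdivisionGraph_adj_inl_inl {v w : V} :
    (squareGraph (subdivisionGraph G)).Adj (.inl v) (.inl w) ↔ G.Adj v w := by
  constructor
  · rintro ⟨hne, h | ⟨_ | e, hv, hw⟩⟩
    · exact h.elim
    · exact hv.elim
    · exact adj_of_mem_edgeSet_of_mem e.2 hv hw (ne_of_apply_ne Sum.inl hne)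
  · intro h
    exact ⟨Sum.inl_injective.ne h.ne,
      .inr ⟨.inr ⟨s(v, w), h⟩, Sym2.mem_mk_left v w, Sym2.mem_mk_right v w⟩⟩

theorem squareGraph_subdivisionGraph_adj_inl_inr {v : V} {e : G.edgeSet} :
    (squareGraph (subdivisionGraph G)).Adj (.inl v) (.inr e) ↔ v ∈ (e : Sym2 V) := by
  constructor
  · rintro ⟨-, h | ⟨_ | _, h, h'⟩⟩
    · exact h
    · exact h.elim
    · exact h'.elim
  · exact fun h => ⟨Sum.inl_ne_inr, .inl h⟩

theorem squareGraph_subdivisionGraph_adj_inr_inr {e f : G.edgeSet} :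
    (squareGraph (subdivisionGraph G)).Adj (.inr e) (.inr f) ↔
      e ≠ f ∧ ∃ v, v ∈ (e : Sym2 V) ∧ v ∈ (f : Sym2 V) := by
  constructor
  · rintro ⟨hne, h | ⟨v | _, hv, hv'⟩⟩
    · exact h.elim
    · exact ⟨ne_of_apply_ne Sum.inr hne, v, hv, hv'⟩
    · exact hv.elim
  · rintro ⟨hne, v, hv, hv'⟩
    exact ⟨Sum.inr_injective.ne hne, .inr ⟨.inl v, hv, hv'⟩⟩

theorem squareGraph_subdivisionGraph : squareGraph (subdivisionGraph G) = totalGraph G := by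
  ext (v | e) (w | f)
  · exact squareGraph_subdivisionGraph_adj_inl_inl
  · exact squareGraph_subdivisionGraph_adj_inl_inr
  · rw [adj_comm]
    exact squareGraph_subdivisionGraph_adj_inl_inr
  · exact squareGraph_subdivisionGraph_adj_inr_inr

theorem totalGraph_comap_inr : (totalGraph G).comap Sum.inr = G.lineGraph := by
  ext e f
  exact lineGraph_adj_iff_exists.symm

end SimpleGraph

/-- The total graph of `G` is the square (2-distance graph) of the
subdivision graph of `G`; under this identification the vertices coming from `V(G)`
induce `G` and the vertices coming from `E(G)` induce the line graph `L(G)`. -/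
theorem totalGraph_eq_square_subdivision {V : Type*} (G : SimpleGraph V) :
    squareGraph (subdivisionGraph G) = totalGraph G ∧
    (totalGraph G).comap Sum.inl = G ∧
    (totalGraph G).comap Sum.inr = G.lineGraph :=
  ⟨SimpleGraph.squareGraph_subdivisionGraph, rfl, SimpleGraph.totalGraph_comap_inr⟩
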